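/- arXiv:1405.5715 — 6 statements merged into one kernel-verified Lean document; each statement's English description precedes it below -/
import Mathlib

section
/- Let E, X, Y be Banach spaces, let C' ≥ C ≥ 1, and let S, T : X → Y be bounded linear operators such that T C-fixes a copy of E and ‖S − T‖ ≤ (C' − C)/(C²·C'). Then S C'-fixes a copy of E. -/
def CFixesCopy {𝕜 : Type*} [RCLike 𝕜] (E : Type*) [NormedAddCommGroup E] [NormedSpace 𝕜 E]
    {X Y : Type*} [NormedAddCommGroup X] [NormedSpace 𝕜 X]
    [NormedAddCommGroup Y] [NormedSpace 𝕜 Y]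
    (T : X →L[𝕜] Y) (C : ℝ) : Prop :=
  ∃ R : E →L[𝕜] X, ‖R‖ ≤ C ∧ ∀ e : E, (1 / C) * ‖e‖ ≤ ‖T (R e)‖

/-
Keep the embedding `R` that witnesses `T`. Since `‖R e‖ ≤ C ‖e‖`, replacing `T` by `S` lowers
`‖T (R e)‖` by at most `‖S - T‖ C ‖e‖ ≤ (C' - C)/(C C') ‖e‖`, and `1/C - (C' - C)/(C C') = 1/C'`.
-/

namespace ContinuousLinearMap

variable {𝕜 E X Y : Type*} [NontriviallyNormedField 𝕜]
  [SeminormedAddCommGroup E] [NormedSpace 𝕜 E]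
  [SeminormedAddCommGroup X] [NormedSpace 𝕜 X]
  [SeminormedAddCommGroup Y] [NormedSpace 𝕜 Y]

theorem norm_apply_le_norm_apply_add_opNorm_sub_mul (S T : X →L[𝕜] Y) (x : X) :
    ‖T x‖ ≤ ‖S x‖ + ‖S - T‖ * ‖x‖ :=
  calc ‖T x‖ = ‖S x - (S - T) x‖ := by rw [sub_apply, sub_sub_cancel]
    _ ≤ ‖S x‖ + ‖(S - T) x‖ := norm_sub_le _ _
    _ ≤ ‖S x‖ + ‖S - T‖ * ‖x‖ := by gcongr; exact le_opNorm _ _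

theorem sub_opNorm_sub_mul_mul_norm_le {S T : X →L[𝕜] Y} {R : E →L[𝕜] X} {c C : ℝ}
    (hR : ‖R‖ ≤ C) {e : E} (hTRe : c * ‖e‖ ≤ ‖T (R e)‖) :
    (c - ‖S - T‖ * C) * ‖e‖ ≤ ‖S (R e)‖ := by
  have hRe : ‖R e‖ ≤ C * ‖e‖ := R.le_of_opNorm_le hR e
  have hST := norm_apply_le_norm_apply_add_opNorm_sub_mul S T (R e)
  have : ‖S - T‖ * ‖R e‖ ≤ ‖S - T‖ * (C * ‖e‖) := by gcongr
  linarith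

end ContinuousLinearMap

theorem one_div_sub_div_mul_eq_one_div {C C' : ℝ} (hC : C ≠ 0) (hC' : C' ≠ 0) :
    1 / C - (C' - C) / (C ^ 2 * C') * C = 1 / C' := by
  field_simp
  ring

theorem cFixesCopy_of_close_general {𝕜 : Type*} [RCLike 𝕜]
    (E : Type*) [NormedAddCommGroup E] [NormedSpace 𝕜 E]
    {X Y : Type*} [NormedAddCommGroup X] [NormedSpace 𝕜 X]
    [NormedAddCommGroup Y] [NormedSpace 𝕜 Y]
    {C C' : ℝ} (hC : 1 ≤ C) (hCC' : C ≤ C')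
    (S T : X →L[𝕜] Y) (hT : CFixesCopy (𝕜 := 𝕜) E T C)
    (hST : ‖S - T‖ ≤ (C' - C) / (C ^ 2 * C')) :
    CFixesCopy (𝕜 := 𝕜) E S C' := by
  obtain ⟨R, hR, hTR⟩ := hT
  have hC0 : 0 < C := zero_lt_one.trans_le hC
  refine ⟨R, hR.trans hCC', fun e => ?_⟩
  calc 1 / C' * ‖e‖ = (1 / C - (C' - C) / (C ^ 2 * C') * C) * ‖e‖ := by
        rw [one_div_sub_div_mul_eq_one_div hC0.ne' (hC0.trans_le hCC').ne']
    _ ≤ (1 / C - ‖S - T‖ * C) * ‖e‖ := by gcongr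
    _ ≤ ‖S (R e)‖ := ContinuousLinearMap.sub_opNorm_sub_mul_mul_norm_le hR (hTR e)

/-- If `C' ≥ C ≥ 1`, `T` `C`-fixes a copy of `E` and
`‖S - T‖ ≤ (C' - C)/(C² C')`, then `S` `C'`-fixes a copy of `E`. -/
theorem cFixesCopy_of_close {𝕜 : Type*} [RCLike 𝕜]
    (E : Type*) [NormedAddCommGroup E] [NormedSpace 𝕜 E] [CompleteSpace E]
    {X Y : Type*} [NormedAddCommGroup X] [NormedSpace 𝕜 X] [CompleteSpace X]
    [NormedAddCommGroup Y] [NormedSpace 𝕜 Y] [CompleteSpace Y]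
    {C C' : ℝ} (hC : 1 ≤ C) (hCC' : C ≤ C')
    (S T : X →L[𝕜] Y) (hT : CFixesCopy (𝕜 := 𝕜) E T C)
    (hST : ‖S - T‖ ≤ (C' - C) / (C ^ 2 * C')) :
    CFixesCopy (𝕜 := 𝕜) E S C' :=
  cFixesCopy_of_close_general E hC hCC' S T hT hST
end

section
/- For any Banach spaces E, X, Y, the set S_E(X,Y) of E-strictly singular operators (operators from X to Y that do not fix a copy of E) is closed in the operator-norm topology of B(X,Y). -/
/-! Fixing a copy of `E` is stable under perturbations of norm less than `1 / (2 C²)`, so the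
operators fixing a copy of `E` form an open set, whose complement is the set in question. -/

/-- `T` fixes a copy of `E` if for some `C ≥ 1` there is `R : E → X` with `‖R‖ ≤ C`
such that `T ∘ R` is bounded below by `1/C`. -/
def FixesCopy {𝕜 : Type*} [RCLike 𝕜] (E : Type*) [NormedAddCommGroup E] [NormedSpace 𝕜 E]
    {X Y : Type*} [NormedAddCommGroup X] [NormedSpace 𝕜 X]
    [NormedAddCommGroup Y] [NormedSpace 𝕜 Y]
    (T : X →L[𝕜] Y) : Prop :=
  ∃ C : ℝ, 1 ≤ C ∧ ∃ R : E →L[𝕜] X, ‖R‖ ≤ C ∧ ∀ e : E, (1 / C) * ‖e‖ ≤ ‖T (R e)‖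

section

variable {𝕜 E X Y : Type*} [NontriviallyNormedField 𝕜]
  [NormedAddCommGroup E] [NormedSpace 𝕜 E] [NormedAddCommGroup X] [NormedSpace 𝕜 X]
  [NormedAddCommGroup Y] [NormedSpace 𝕜 Y]

theorem ContinuousLinearMap.sub_mul_le_norm_comp_of_le_norm_comp
    {R : E →L[𝕜] X} {T : X →L[𝕜] Y} {c : ℝ} (hT : ∀ e, c * ‖e‖ ≤ ‖T (R e)‖)
    (S : X →L[𝕜] Y) (e : E) : (c - ‖S - T‖ * ‖R‖) * ‖e‖ ≤ ‖S (R e)‖ := by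
  have hdiff : ‖(S - T) (R e)‖ ≤ ‖S - T‖ * ‖R‖ * ‖e‖ := by
    rw [mul_assoc]
    exact (S - T).le_of_opNorm_le_of_le le_rfl (R.le_opNorm e)
  have htri : ‖T (R e)‖ ≤ ‖S (R e)‖ + ‖(S - T) (R e)‖ := by
    simpa using norm_sub_le (S (R e)) ((S - T) (R e))
  nlinarith [hT e]

end

theorem isOpen_setOf_fixesCopy {𝕜 : Type*} [RCLike 𝕜] (E : Type*) [NormedAddCommGroup E]
    [NormedSpace 𝕜 E] (X Y : Type*) [NormedAddCommGroup X] [NormedSpace 𝕜 X]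
    [NormedAddCommGroup Y] [NormedSpace 𝕜 Y] :
    IsOpen {T : X →L[𝕜] Y | FixesCopy (𝕜 := 𝕜) E T} := by
  rw [Metric.isOpen_iff]
  rintro T ⟨C, hC, R, hR, hT⟩
  have hC0 : 0 < C := one_pos.trans_le hC
  refine ⟨1 / (2 * C ^ 2), by positivity, fun S hS => ⟨2 * C, by linarith, R, by linarith, ?_⟩⟩
  rw [Metric.mem_ball, dist_eq_norm] at hS
  intro e
  have hsmall : ‖S - T‖ * ‖R‖ ≤ 1 / (2 * C) := calc
    ‖S - T‖ * ‖R‖ ≤ 1 / (2 * C ^ 2) * C := by gcongr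
    _ = 1 / (2 * C) := by field_simp
  calc 1 / (2 * C) * ‖e‖ = (1 / C - 1 / (2 * C)) * ‖e‖ := by field_simp; ring
    _ ≤ (1 / C - ‖S - T‖ * ‖R‖) * ‖e‖ := by gcongr
    _ ≤ ‖S (R e)‖ := ContinuousLinearMap.sub_mul_le_norm_comp_of_le_norm_comp hT S e

theorem isClosed_strictlySingular_general {𝕜 : Type*} [RCLike 𝕜]
    (E : Type*) [NormedAddCommGroup E] [NormedSpace 𝕜 E]
    (X Y : Type*) [NormedAddCommGroup X] [NormedSpace 𝕜 X]
    [NormedAddCommGroup Y] [NormedSpace 𝕜 Y] :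
    IsClosed {T : X →L[𝕜] Y | ¬ FixesCopy (𝕜 := 𝕜) E T} :=
  (isOpen_setOf_fixesCopy E X Y).isClosed_compl

/-- The set of `E`-strictly singular operators from `X` to `Y`
is closed in the operator-norm topology. -/
theorem isClosed_strictlySingular {𝕜 : Type*} [RCLike 𝕜]
    (E : Type*) [NormedAddCommGroup E] [NormedSpace 𝕜 E] [CompleteSpace E]
    (X Y : Type*) [NormedAddCommGroup X] [NormedSpace 𝕜 X] [CompleteSpace X]
    [NormedAddCommGroup Y] [NormedSpace 𝕜 Y] [CompleteSpace Y] :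
    IsClosed {T : X →L[𝕜] Y | ¬ FixesCopy (𝕜 := 𝕜) E T} :=
  isClosed_strictlySingular_general E X Y
end

section
/- Let X, Y be infinite-dimensional Banach spaces and let T : X → Y be a bounded operator that is not bounded below on any finite-codimensional closed subspace of X. Then for each ε > 0, X contains a closed infinite-dimensional subspace W such that the restriction T|_W is an approximable operator (a norm-limit of finite-rank operators) of norm at most ε. -/
/-!
Since `T` is not bounded below on any closed subspace of finite codimension, we can choose unit
vectors `xₙ` with `‖T xₙ‖ < ε / 2 / 4ⁿ`, each lying in the kernels of norming functionals `hₖ` of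
the earlier `xₖ`. Inverting the triangular system `hₖ (xₙ) = δₖₙ` (`k ≤ n`) gives biorthogonal
functionals `gₙ` with `‖gₙ‖ ≤ 2ⁿ`, so `S = ∑ gₙ ⊗ T xₙ` converges absolutely to an approximable
operator of norm at most `ε`. It agrees with `T` on every `xₙ`, hence on their closed span `W`,
which is infinite-dimensional because the `xₙ` are biorthogonal to the `gₙ`.
-/

section

variable {𝕜 : Type*} [RCLike 𝕜] {X Y : Type*} [NormedAddCommGroup X] [NormedSpace 𝕜 X]
  [NormedAddCommGroup Y] [NormedSpace 𝕜 Y]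

theorem ContinuousLinearMap.exists_mem_norm_eq_one_norm_apply_lt (T : X →L[𝕜] Y)
    {W : Submodule 𝕜 X} (hT : ¬ ∃ c : ℝ, 0 < c ∧ ∀ w ∈ W, c * ‖w‖ ≤ ‖T w‖) {δ : ℝ}
    (hδ : 0 < δ) : ∃ x ∈ W, ‖x‖ = 1 ∧ ‖T x‖ < δ := by
  push Not at hT
  obtain ⟨w, hwW, hw⟩ := hT δ hδ
  have hw0 : w ≠ 0 := by rintro rfl; simp at hw
  refine ⟨(‖w‖⁻¹ : 𝕜) • w, W.smul_mem _ hwW, norm_smul_inv_norm hw0, ?_⟩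
  rw [map_smul, norm_smul, norm_inv, RCLike.norm_ofReal, abs_norm,
    inv_mul_lt_iff₀ (norm_pos_iff.2 hw0)]
  linarith

theorem ContinuousLinearMap.exists_norm_eq_one_forall_apply_eq_zero (T : X →L[𝕜] Y)
    (hT : ∀ W : Submodule 𝕜 X, IsClosed (W : Set X) → FiniteDimensional 𝕜 (X ⧸ W) →
      ¬ ∃ c : ℝ, 0 < c ∧ ∀ w ∈ W, c * ‖w‖ ≤ ‖T w‖)
    (s : Finset (StrongDual 𝕜 X)) {δ : ℝ} (hδ : 0 < δ) :
    ∃ x : X, ‖x‖ = 1 ∧ (∀ f ∈ s, f x = 0) ∧ ‖T x‖ < δ := by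
  let Φ : X →L[𝕜] (s → 𝕜) := ContinuousLinearMap.pi fun f => (f : StrongDual 𝕜 X)
  have : FiniteDimensional 𝕜 (X ⧸ LinearMap.ker (Φ : X →ₗ[𝕜] s → 𝕜)) :=
    Module.Finite.equiv (LinearMap.quotKerEquivRange _).symm
  obtain ⟨x, hxΦ, hx1, hTx⟩ := T.exists_mem_norm_eq_one_norm_apply_lt
    (hT _ Φ.isClosed_ker this) hδ
  exact ⟨x, hx1, fun f hf => congrFun hxΦ ⟨f, hf⟩, hTx⟩

theorem ContinuousLinearMap.exists_triangular_seq_norm_apply_lt (T : X →L[𝕜] Y)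
    (hT : ∀ W : Submodule 𝕜 X, IsClosed (W : Set X) → FiniteDimensional 𝕜 (X ⧸ W) →
      ¬ ∃ c : ℝ, 0 < c ∧ ∀ w ∈ W, c * ‖w‖ ≤ ‖T w‖)
    {δ : ℕ → ℝ} (hδ : ∀ n, 0 < δ n) (hδ_anti : Antitone δ) :
    ∃ (x : ℕ → X) (h : ℕ → StrongDual 𝕜 X), (∀ n, ‖x n‖ = 1) ∧ (∀ n, ‖h n‖ = 1) ∧
      (∀ n, h n (x n) = 1) ∧ (∀ k n, k < n → h k (x n) = 0) ∧ ∀ n, ‖T (x n)‖ < δ n := by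
  -- The index component, chosen above those of all earlier terms, gives the `n`-th term `δ n`.
  obtain ⟨f, hP, hr⟩ := exists_seq_of_forall_finset_exists
    (fun p : ℕ × X × StrongDual 𝕜 X =>
      ‖p.2.1‖ = 1 ∧ ‖p.2.2‖ = 1 ∧ p.2.2 p.2.1 = 1 ∧ ‖T p.2.1‖ < δ p.1)
    (fun p q => p.1 < q.1 ∧ p.2.2 q.2.1 = 0) fun s _ => by
      classical
      obtain ⟨x, hx1, hxs, hTx⟩ :=
        T.exists_norm_eq_one_forall_apply_eq_zero hT (s.image fun p => p.2.2)
          (hδ (s.sup Prod.fst + 1))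
      obtain ⟨h, hh1, hhx⟩ := exists_dual_vector 𝕜 x (by simp [hx1])
      exact ⟨(s.sup Prod.fst + 1, x, h), ⟨hx1, hh1, by simp [hhx, hx1], hTx⟩,
        fun p hp => ⟨Nat.lt_succ_of_le (Finset.le_sup hp), hxs _ (Finset.mem_image_of_mem _ hp)⟩⟩
  have hmono : StrictMono fun n => (f n).1 := fun m n hmn => (hr m n hmn).1
  exact ⟨fun n => (f n).2.1, fun n => (f n).2.2, fun n => (hP n).1, fun n => (hP n).2.1,
    fun n => (hP n).2.2.1, fun k n hkn => (hr k n hkn).2,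
    fun n => (hP n).2.2.2.trans_le (hδ_anti (hmono.id_le n))⟩

noncomputable def biorthogonalDual (x : ℕ → X) (h : ℕ → StrongDual 𝕜 X) (n : ℕ) :
    StrongDual 𝕜 X :=
  h n - ∑ k : Fin n, h n (x k) • biorthogonalDual x h k

theorem biorthogonalDual_apply {x : ℕ → X} {h : ℕ → StrongDual 𝕜 X}
    (hdiag : ∀ n, h n (x n) = 1) (htri : ∀ k n, k < n → h k (x n) = 0) (n m : ℕ) :
    biorthogonalDual x h n (x m) = if n = m then 1 else 0 := by
  induction n using Nat.strong_induction_on generalizing m with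
  | _ n ih =>
    have hsum : ∑ k : Fin n, h n (x k) * biorthogonalDual x h k (x m) =
        if m < n then h n (x m) else 0 := by
      simp only [fun k : Fin n => ih k k.isLt m, mul_ite, mul_one, mul_zero]
      rw [Fin.sum_univ_eq_sum_range (fun k => if k = m then h n (x k) else 0)]
      simp [Finset.sum_ite_eq']
    rw [biorthogonalDual]
    simp only [sub_apply, FunLike.coe_sum, Finset.sum_apply, smul_apply, smul_eq_mul, hsum]
    rcases lt_trichotomy m n with hmn | rfl | hnm
    · simp [hmn, hmn.ne']
    · simp [hdiag]
    · simp [hnm.not_gt, hnm.ne, htri n m hnm]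

theorem norm_biorthogonalDual_le {x : ℕ → X} {h : ℕ → StrongDual 𝕜 X}
    (hx : ∀ n, ‖x n‖ ≤ 1) (hh : ∀ n, ‖h n‖ ≤ 1) (n : ℕ) :
    ‖biorthogonalDual x h n‖ ≤ 2 ^ n := by
  induction n using Nat.strong_induction_on with
  | _ n ih =>
    have hcoef : ∀ k, ‖h n (x k)‖ ≤ 1 := fun k =>
      ((h n).le_opNorm _).trans (mul_le_one₀ (hh n) (norm_nonneg _) (hx k))
    rw [biorthogonalDual]
    calc ‖h n - ∑ k : Fin n, h n (x k) • biorthogonalDual x h k‖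
        ≤ ‖h n‖ + ∑ k : Fin n, ‖h n (x k)‖ * ‖biorthogonalDual x h k‖ := by
          refine (norm_sub_le _ _).trans (add_le_add_right ?_ _)
          exact (norm_sum_le _ _).trans (Finset.sum_le_sum fun k _ => (norm_smul _ _).le)
      _ ≤ 1 + ∑ k : Fin n, (2 : ℝ) ^ (k : ℕ) := by
          gcongr with k
          · exact hh n
          · exact (mul_le_of_le_one_left (norm_nonneg _) (hcoef k)).trans (ih k k.isLt)
      _ = 2 ^ n := by
          rw [Fin.sum_univ_eq_sum_range (fun k => (2 : ℝ) ^ k), geom_sum_eq (by norm_num)]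
          ring

theorem Submodule.not_finiteDimensional_of_biorthogonal {W : Submodule 𝕜 X} {x : ℕ → X}
    {g : ℕ → StrongDual 𝕜 X} (hgx : ∀ n m, g n (x m) = if n = m then 1 else 0)
    (hxW : ∀ n, x n ∈ W) : ¬ FiniteDimensional 𝕜 W := fun _ =>
  Module.Finite.not_linearIndependent_of_infinite (fun n => (⟨x n, hxW n⟩ : W)) <|
    .of_pairwise_dual_eq_zero_one _ (fun n => (g n : X →ₗ[𝕜] 𝕜).domRestrict W)
      (fun n m hnm => by simp [hgx, hnm]) fun n => by simp [hgx]

theorem mem_closure_finiteDimensional_range_of_hasSum {E ι : Type*} [NormedAddCommGroup E]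
    [NormedSpace 𝕜 E] {g : ι → StrongDual 𝕜 E} {y : ι → Y} {S : E →L[𝕜] Y}
    (hS : HasSum (fun i => (g i).smulRight (y i)) S) :
    S ∈ closure {A : E →L[𝕜] Y | FiniteDimensional 𝕜 (LinearMap.range (A : E →ₗ[𝕜] Y))} := by
  refine mem_closure_of_tendsto hS (Filter.Eventually.of_forall fun s => ?_)
  have hrange : LinearMap.range ((∑ i ∈ s, (g i).smulRight (y i) : E →L[𝕜] Y) : E →ₗ[𝕜] Y) ≤
      Submodule.span 𝕜 (y '' s) := by
    rintro _ ⟨e, rfl⟩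
    simp only [ContinuousLinearMap.coe_coe, FunLike.coe_sum, Finset.sum_apply,
      ContinuousLinearMap.smulRight_apply]
    exact Submodule.sum_mem _ fun i hi =>
      Submodule.smul_mem _ _ (Submodule.subset_span (Set.mem_image_of_mem y hi))
  have : FiniteDimensional 𝕜 (Submodule.span 𝕜 (y '' s)) :=
    FiniteDimensional.span_of_finite 𝕜 (s.finite_toSet.image y)
  exact Submodule.finiteDimensional_of_le hrange

theorem tsum_smulRight_apply_of_biorthogonal {x : ℕ → X} {g : ℕ → StrongDual 𝕜 X}
    (hgx : ∀ n m, g n (x m) = if n = m then 1 else 0) {y : ℕ → Y}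
    (hs : Summable fun n => (g n).smulRight (y n)) (m : ℕ) :
    (∑' n, (g n).smulRight (y n)) (x m) = y m := by
  calc (∑' n, (g n).smulRight (y n)) (x m) = ∑' n, (g n).smulRight (y n) (x m) :=
        (ContinuousLinearMap.apply 𝕜 Y (x m)).map_tsum hs
    _ = y m := by
        rw [tsum_eq_single m fun n hnm => by simp [hgx, hnm]]
        simp [hgx]

theorem ContinuousLinearMap.comp_subtypeL_closure_span_approximable_of_biorthogonal
    [CompleteSpace Y] (T : X →L[𝕜] Y) {x : ℕ → X} {g : ℕ → StrongDual 𝕜 X}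
    (hgx : ∀ n m, g n (x m) = if n = m then 1 else 0) {b : ℕ → ℝ} {B : ℝ} (hb : HasSum b B)
    (hbound : ∀ n, ‖(g n).smulRight (T (x n))‖ ≤ b n) :
    let W := (Submodule.span 𝕜 (Set.range x)).topologicalClosure
    T.comp W.subtypeL ∈
        closure {A : W →L[𝕜] Y | FiniteDimensional 𝕜 (LinearMap.range (A : W →ₗ[𝕜] Y))} ∧
      ‖T.comp W.subtypeL‖ ≤ B := by
  intro W
  have hsum := Summable.of_norm_bounded hb.summable hbound
  set S := ∑' n, (g n).smulRight (T (x n))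
  have hTS : T.comp W.subtypeL = S.comp W.subtypeL := by
    ext ⟨w, hw⟩
    refine ContinuousLinearMap.eqOn_closure_span (s := Set.range x) ?_
      (by rwa [← Submodule.topologicalClosure_coe])
    rintro _ ⟨m, rfl⟩
    exact (tsum_smulRight_apply_of_biorthogonal hgx hsum m).symm
  have hSW : HasSum (fun n => ((g n).comp W.subtypeL).smulRight (T (x n))) (S.comp W.subtypeL) :=
    hsum.hasSum.mapL ((ContinuousLinearMap.compL 𝕜 W X Y).flip W.subtypeL)
  have hS : ‖S‖ ≤ B := tsum_of_norm_bounded hb hbound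
  rw [hTS]
  refine ⟨mem_closure_finiteDimensional_range_of_hasSum hSW, ?_⟩
  calc ‖S.comp W.subtypeL‖ ≤ ‖S‖ * ‖W.subtypeL‖ := S.opNorm_comp_le _
    _ ≤ B * 1 := mul_le_mul hS (Submodule.norm_subtypeL_le W) (norm_nonneg _)
        ((norm_nonneg _).trans hS)
    _ = B := mul_one B

end

theorem kato_lemma_general {𝕜 : Type*} [RCLike 𝕜]
    {X Y : Type*} [NormedAddCommGroup X] [NormedSpace 𝕜 X]
    [NormedAddCommGroup Y] [NormedSpace 𝕜 Y] [CompleteSpace Y]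
    (T : X →L[𝕜] Y)
    (hT : ∀ W : Submodule 𝕜 X, IsClosed (W : Set X) → FiniteDimensional 𝕜 (X ⧸ W) →
      ¬ ∃ c : ℝ, 0 < c ∧ ∀ w ∈ W, c * ‖w‖ ≤ ‖T w‖) :
    ∀ ε : ℝ, 0 < ε → ∃ W : Submodule 𝕜 X, IsClosed (W : Set X) ∧
      ¬ FiniteDimensional 𝕜 W ∧
      (T.comp W.subtypeL) ∈
        closure {A : W →L[𝕜] Y | FiniteDimensional 𝕜 (LinearMap.range (A : W →ₗ[𝕜] Y))} ∧
      ‖T.comp W.subtypeL‖ ≤ ε := by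
  intro ε hε
  obtain ⟨x, h, hx1, hh1, hdiag, htri, hTx⟩ := T.exists_triangular_seq_norm_apply_lt hT
    (δ := fun n => ε / 2 / 4 ^ n) (fun n => by positivity)
    fun m n hmn => div_le_div_of_nonneg_left (by positivity) (by positivity)
      (pow_le_pow_right₀ (by norm_num) hmn)
  have hgx := biorthogonalDual_apply hdiag htri
  have hbound (n : ℕ) : ‖(biorthogonalDual x h n).smulRight (T (x n))‖ ≤ ε / 2 / 2 ^ n := by
    rw [ContinuousLinearMap.norm_smulRight_apply]
    calc ‖biorthogonalDual x h n‖ * ‖T (x n)‖ ≤ 2 ^ n * (ε / 2 / 4 ^ n) :=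
          mul_le_mul (norm_biorthogonalDual_le (fun n => (hx1 n).le) (fun n => (hh1 n).le) n)
            (hTx n).le (norm_nonneg _) (by positivity)
      _ = ε / 2 / 2 ^ n := by
          rw [show (4 : ℝ) ^ n = 2 ^ n * 2 ^ n by rw [← mul_pow]; norm_num]
          field_simp
  exact ⟨(Submodule.span 𝕜 (Set.range x)).topologicalClosure,
    Submodule.isClosed_topologicalClosure _,
    Submodule.not_finiteDimensional_of_biorthogonal hgx fun n =>
      Submodule.le_topologicalClosure _ (Submodule.subset_span ⟨n, rfl⟩),
    T.comp_subtypeL_closure_span_approximable_of_biorthogonal hgx (hasSum_geometric_two' ε) hbound⟩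

/-- **Kato's lemma.** Let `X`, `Y` be infinite-dimensional Banach spaces and
`T : X → Y` a bounded operator not bounded below on any closed finite-codimensional subspace
of `X`. Then for each `ε > 0` there is a closed infinite-dimensional subspace `W` of `X` on
which `T` restricts to an approximable operator of norm at most `ε`. -/
theorem kato_lemma {𝕜 : Type*} [RCLike 𝕜]
    {X Y : Type*} [NormedAddCommGroup X] [NormedSpace 𝕜 X] [CompleteSpace X]
    [NormedAddCommGroup Y] [NormedSpace 𝕜 Y] [CompleteSpace Y]
    (hX : ¬ FiniteDimensional 𝕜 X) (hY : ¬ FiniteDimensional 𝕜 Y)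
    (T : X →L[𝕜] Y)
    (hT : ∀ W : Submodule 𝕜 X, IsClosed (W : Set X) → FiniteDimensional 𝕜 (X ⧸ W) →
      ¬ ∃ c : ℝ, 0 < c ∧ ∀ w ∈ W, c * ‖w‖ ≤ ‖T w‖) :
    ∀ ε : ℝ, 0 < ε → ∃ W : Submodule 𝕜 X, IsClosed (W : Set X) ∧
      ¬ FiniteDimensional 𝕜 W ∧
      (T.comp W.subtypeL) ∈
        closure {A : W →L[𝕜] Y | FiniteDimensional 𝕜 (LinearMap.range (A : W →ₗ[𝕜] Y))} ∧
      ‖T.comp W.subtypeL‖ ≤ ε :=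
  kato_lemma_general T hT
end

section
/- Let T be a bounded operator on X = (⊕_{n∈ℕ} X_n)_{ℓ_p}, where each X_n is finite-dimensional and 1 < p < ∞. Then for each ε > 0 there exists a bounded operator T' on X with finite rows and finite columns such that T − T' is approximable and ‖T − T'‖ ≤ ε. -/
open scoped ENNReal

/-- `T` has finite rows: each row `j` of the matrix `(π_j T ι_k)` has only finitely many
nonzero entries. -/
def FiniteRows {𝕜 : Type*} [RCLike 𝕜] {X : ℕ → Type*} [∀ n, NormedAddCommGroup (X n)]
    [∀ n, NormedSpace 𝕜 (X n)] {p : ℝ≥0∞} [Fact (1 ≤ p)]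
    (T : lp X p →L[𝕜] lp X p) : Prop :=
  ∀ j : ℕ, ∃ k₀ : ℕ, ∀ k : ℕ, k₀ < k →
    ∀ y : lp X p, (∀ i : ℕ, i ≠ k → y i = 0) → T y j = 0

/-- `T` has finite columns: each column `k` of the matrix `(π_j T ι_k)` has only finitely
many nonzero entries. -/
def FiniteColumns {𝕜 : Type*} [RCLike 𝕜] {X : ℕ → Type*} [∀ n, NormedAddCommGroup (X n)]
    [∀ n, NormedSpace 𝕜 (X n)] {p : ℝ≥0∞} [Fact (1 ≤ p)]
    (T : lp X p →L[𝕜] lp X p) : Prop :=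
  ∀ k : ℕ, ∃ j₀ : ℕ, ∀ j : ℕ, j₀ < j →
    ∀ y : lp X p, (∀ i : ℕ, i ≠ k → y i = 0) → T y j = 0

/-!
Write `P_m` for the projection of `ℓ_p` onto the coordinates `≥ m`. Row `j` of `T` is the
operator `π_j T` into the finite-dimensional `X_j`, and for `1 < p < ∞` its tails `π_j T P_m`
tend to zero in norm. It suffices to see this for a functional `φ`: if `‖φ P_m‖ ≥ ε` for
infinitely many `m`, one finds `y_1, …, y_N` of norm `≤ 1` with consecutive disjoint finite
supports and `Re φ y_i > ε / 2`; then `‖∑ y_i‖ ≤ N^{1/p}` while `Re φ (∑ y_i) > N ε / 2`, which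
is absurd for large `N` because `1/p < 1`. Dually, column `k` is an operator `T ι_k` out of the
finite-dimensional `X_k`, and `P_m T ι_k → 0` because `P_m → 0` strongly when `p < ∞`.

Choosing `m_j` with `‖π_j T P_{m_j}‖ ≤ ε 2^{-j-2}` and subtracting `∑_j ι_j π_j T P_{m_j}` makes
the rows finite at the cost of an operator of norm `≤ ε/2` that is a norm-convergent series of
finite rank operators. Cutting the columns of the result in the same way keeps the rows finite,
since it only replaces entries by zero.
-/

open Filter Topology

namespace ContinuousLinearMap

variable {𝕜 E F G : Type*} [NontriviallyNormedField 𝕜]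
  [NormedAddCommGroup E] [NormedSpace 𝕜 E] [NormedAddCommGroup F] [NormedSpace 𝕜 F]
  [NormedAddCommGroup G] [NormedSpace 𝕜 G]

variable (𝕜 E F) in
def finiteRank : Submodule 𝕜 (E →L[𝕜] F) :=
  (LinearMap.finiteRange 𝕜 E F).comap (coeLM 𝕜)

theorem coe_finiteRank : (finiteRank 𝕜 E F : Set (E →L[𝕜] F)) =
    {A : E →L[𝕜] F | FiniteDimensional 𝕜 (LinearMap.range (A : E →ₗ[𝕜] F))} :=
  Set.ext fun _ => IsNoetherian.iff_fg

theorem comp_mem_finiteRank [FiniteDimensional 𝕜 G] (g : G →L[𝕜] F) (h : E →L[𝕜] G) :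
    g ∘L h ∈ finiteRank 𝕜 E F :=
  LinearMap.HasNoetherianRange.of_isNoetherian_dom.comp_right (h : E →ₗ[𝕜] G)

theorem tsum_apply_of_summable {ι : Type*} {A : ι → E →L[𝕜] F} (hA : Summable A) (x : E) :
    (∑' i, A i) x = ∑' i, A i x :=
  (apply 𝕜 F x).map_tsum hA

variable [CompleteSpace 𝕜]

theorem tendsto_zero_of_forall_dual_comp [FiniteDimensional 𝕜 F] {A : ℕ → E →L[𝕜] F}
    (h : ∀ φ : StrongDual 𝕜 F, Tendsto (fun m => φ ∘L A m) atTop (𝓝 0)) :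
    Tendsto A atTop (𝓝 0) := by
  let b := Module.finBasis 𝕜 F
  let c i : StrongDual 𝕜 F := LinearMap.toContinuousLinearMap (b.coord i)
  have hA : ∀ m, A m = ∑ i, (c i ∘L A m).smulRight (b i) := fun m => by
    ext x; simp [c, b.sum_repr]
  have := tendsto_finsetSum Finset.univ fun i _ =>
    (((smulRightL 𝕜 E F).flip (b i)).continuous.tendsto 0).comp (h (c i))
  simpa [← hA] using this

theorem tendsto_zero_of_forall_apply [FiniteDimensional 𝕜 E] {A : ℕ → E →L[𝕜] F}
    (h : ∀ x, Tendsto (fun m => A m x) atTop (𝓝 0)) : Tendsto A atTop (𝓝 0) := by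
  let b := Module.finBasis 𝕜 E
  obtain ⟨C, -, hC⟩ := b.exists_opNorm_le (F := F)
  rw [tendsto_zero_iff_norm_tendsto_zero]
  refine squeeze_zero (fun _ => norm_nonneg _) (fun m => hC (by positivity) fun i =>
    Finset.single_le_sum (f := fun i => ‖A m (b i)‖) (fun _ _ => norm_nonneg _)
      (Finset.mem_univ i)) ?_
  simpa using (tendsto_finsetSum Finset.univ fun i _ => (h (b i)).norm).const_mul C

end ContinuousLinearMap

theorem exists_nat_mul_rpow_lt {r : ℝ} (hr : r < 1) (C : ℝ) {δ : ℝ} (hδ : 0 < δ) :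
    ∃ N : ℕ, C * (N : ℝ) ^ r < N * δ := by
  have hlim : Tendsto (fun N : ℕ => (N : ℝ) ^ (1 - r)) atTop atTop :=
    (tendsto_rpow_atTop (sub_pos.2 hr)).comp tendsto_natCast_atTop_atTop
  obtain ⟨N, hN, hN1⟩ := ((hlim.eventually_gt_atTop (C / δ)).and (eventually_ge_atTop 1)).exists
  have hNpos : (0 : ℝ) < N := by exact_mod_cast hN1
  refine ⟨N, ?_⟩
  calc C * (N : ℝ) ^ r = C / δ * (N : ℝ) ^ r * δ := by field_simp
    _ < (N : ℝ) ^ (1 - r) * (N : ℝ) ^ r * δ := by gcongr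
    _ = N * δ := by rw [← Real.rpow_add hNpos, sub_add_cancel, Real.rpow_one]

namespace lp

theorem norm_add_rpow_eq_of_disjoint {α : Type*} {E : α → Type*} [∀ i, NormedAddCommGroup (E i)]
    {p : ℝ≥0∞} (hp : 0 < p.toReal) {f g : lp E p} (h : ∀ i, f i = 0 ∨ g i = 0) :
    ‖f + g‖ ^ p.toReal = ‖f‖ ^ p.toReal + ‖g‖ ^ p.toReal := by
  rw [lp.norm_rpow_eq_tsum hp, lp.norm_rpow_eq_tsum hp, lp.norm_rpow_eq_tsum hp,
    ← ((lp.memℓp f).summable hp).tsum_add ((lp.memℓp g).summable hp)]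
  congr 1 with i
  rcases h i with hi | hi <;> simp [hi, Real.zero_rpow hp.ne']

variable {𝕜 : Type*} [RCLike 𝕜] {X : ℕ → Type*} [∀ n, NormedAddCommGroup (X n)]
  [∀ n, NormedSpace 𝕜 (X n)] {p : ℝ≥0∞}

theorem eq_single_of_forall_ne {y : lp X p} {k : ℕ} (hy : ∀ i, i ≠ k → y i = 0) :
    y = lp.single p k (y k) := by
  refine lp.ext <| funext fun i => ?_
  rcases eq_or_ne i k with rfl | hi
  · simp
  · simp [hi, hy i hi]

variable [Fact (1 ≤ p)]

theorem norm_singleContinuousLinearMap_le (k : ℕ) :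
    ‖lp.singleContinuousLinearMap 𝕜 X p k‖ ≤ 1 :=
  ContinuousLinearMap.opNorm_le_bound _ zero_le_one fun x => by
    simp [lp.norm_single (zero_lt_one.trans_le Fact.out)]

@[simp]
theorem evalCLM_apply (j : ℕ) (f : lp X p) : lp.evalCLM 𝕜 X p j f = f j :=
  rfl

theorem norm_evalCLM_le (j : ℕ) : ‖lp.evalCLM 𝕜 X p j‖ ≤ 1 :=
  LinearMap.mkContinuous_norm_le _ zero_le_one _

variable (𝕜) in
noncomputable def tailCLM (m : ℕ) : lp X p →L[𝕜] lp X p :=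
  LinearMap.mkContinuous
    { toFun f := ⟨fun i => if m ≤ i then f i else 0,
        (lp.memℓp f).mono' fun i => by split_ifs <;> simp⟩
      map_add' f g := lp.ext <| funext fun i =>
        show (if m ≤ i then f i + g i else 0) =
            (if m ≤ i then f i else 0) + (if m ≤ i then g i else 0) by split_ifs <;> simp
      map_smul' c f := lp.ext <| funext fun i =>
        show (if m ≤ i then c • f i else 0) = c • (if m ≤ i then f i else 0) by split_ifs <;> simp }
    1 fun f => by
      rw [one_mul]
      exact lp.norm_mono (zero_lt_one.trans_le Fact.out).ne' fun i =>
        show ‖if m ≤ i then f i else 0‖ ≤ _ by split_ifs <;> simp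

@[simp]
theorem tailCLM_apply (m : ℕ) (f : lp X p) (i : ℕ) :
    tailCLM 𝕜 m f i = if m ≤ i then f i else 0 :=
  rfl

theorem tailCLM_eq_self {m : ℕ} {f : lp X p} (hf : ∀ i, i < m → f i = 0) :
    tailCLM 𝕜 m f = f := by
  refine lp.ext <| funext fun i => ?_
  by_cases hi : m ≤ i
  · simp [hi]
  · simp [hi, hf i (not_le.1 hi)]

theorem norm_tailCLM_apply_le (m : ℕ) (f : lp X p) : ‖tailCLM 𝕜 m f‖ ≤ ‖f‖ :=
  lp.norm_mono (zero_lt_one.trans_le Fact.out).ne' fun i => by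
    by_cases hi : m ≤ i <;> simp [hi]

theorem norm_sub_tailCLM_apply_le (m : ℕ) (f : lp X p) : ‖f - tailCLM 𝕜 m f‖ ≤ ‖f‖ :=
  lp.norm_mono (zero_lt_one.trans_le Fact.out).ne' fun i => by
    by_cases hi : m ≤ i <;> simp [hi]

theorem tendsto_tailCLM_apply (hp : p ≠ ∞) (f : lp X p) :
    Tendsto (fun m => tailCLM 𝕜 m f) atTop (𝓝 0) := by
  have hhead : ∀ m, tailCLM 𝕜 m f = f - ∑ i ∈ Finset.range m, lp.single p i (f i) := fun m =>
    lp.ext <| funext fun j => by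
      simp only [tailCLM_apply, lp.coeFn_sub, Pi.sub_apply, lp.coeFn_sum, Finset.sum_apply,
        lp.single_apply]
      by_cases hj : m ≤ j
      · simp [hj, not_lt.2 hj]
      · simp [hj, not_le.1 hj]
  simpa [hhead] using ((lp.hasSum_single hp f).tendsto_sum_nat).const_sub f

open RCLike in
theorem exists_block_re_gt (hp : p ≠ ∞) (φ : StrongDual 𝕜 (lp X p)) {m : ℕ} {δ : ℝ}
    (hδ : δ < ‖φ ∘L tailCLM 𝕜 m‖) :
    ∃ (y : lp X p) (m' : ℕ), ‖y‖ ≤ 1 ∧ (∀ i, y i ≠ 0 → m ≤ i ∧ i < m') ∧ δ < re (φ y) := by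
  obtain ⟨x, hx, hφx⟩ := (φ ∘L tailCLM 𝕜 m).exists_lt_apply_of_lt_opNorm hδ
  obtain ⟨c, hc, hcφ⟩ := exists_norm_eq_mul_self (φ (tailCLM 𝕜 m x))
  set w := c • tailCLM 𝕜 m x
  have hw : ‖w‖ ≤ 1 := by
    rw [norm_smul, hc, one_mul]
    exact (norm_tailCLM_apply_le m x).trans hx.le
  have hφw : re (φ w) = ‖(φ ∘L tailCLM 𝕜 m) x‖ := by
    simp [w, ← hcφ]
  have hcut : Tendsto (fun m' => w - tailCLM 𝕜 m' w) atTop (𝓝 w) := by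
    simpa using (tendsto_tailCLM_apply hp w).const_sub w
  obtain ⟨m', hm'⟩ := ((((continuous_re.comp φ.continuous).tendsto w).comp hcut).eventually
    (lt_mem_nhds (hφw ▸ hφx))).exists
  refine ⟨w - tailCLM 𝕜 m' w, m', (norm_sub_tailCLM_apply_le m' w).trans hw, fun i hi => ?_, hm'⟩
  simp only [w, lp.coeFn_sub, lp.coeFn_smul, Pi.sub_apply, Pi.smul_apply, tailCLM_apply] at hi
  split_ifs at hi with him him' <;> simp_all

open RCLike in
theorem tendsto_dual_comp_tailCLM (hp1 : 1 < p) (hp : p ≠ ∞) (φ : StrongDual 𝕜 (lp X p)) :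
    Tendsto (fun m => φ ∘L tailCLM 𝕜 m) atTop (𝓝 0) := by
  have hp0 : 0 < p.toReal := ENNReal.toReal_pos (zero_lt_one.trans hp1).ne' hp
  by_contra hφ
  obtain ⟨ε, hε, hfreq⟩ : ∃ ε > 0, ∀ N, ∃ n ≥ N, ε ≤ ‖φ ∘L tailCLM 𝕜 n‖ := by
    simpa [Metric.tendsto_atTop, dist_zero_right] using hφ
  have hblocks : ∀ N : ℕ, ∃ (z : lp X p) (m : ℕ), (∀ i, m ≤ i → z i = 0) ∧
      ‖z‖ ^ p.toReal ≤ N ∧ N * (ε / 2) ≤ re (φ z) := by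
    intro N
    induction N with
    | zero => exact ⟨0, 0, by simp, by simp [Real.zero_rpow hp0.ne'], by simp⟩
    | succ N ih =>
      obtain ⟨z, m, hz, hzN, hφz⟩ := ih
      obtain ⟨n, hmn, hεn⟩ := hfreq m
      obtain ⟨y, m', hy1, hy, hφy⟩ := exists_block_re_gt hp φ ((half_lt_self hε).trans_le hεn)
      have hyz : ∀ i, z i = 0 ∨ y i = 0 := fun i => by
        by_cases hi : m ≤ i
        · exact .inl (hz i hi)
        · exact .inr (by_contra fun h => hi (hmn.trans (hy i h).1))
      refine ⟨z + y, max m m', fun i hi => ?_, ?_, ?_⟩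
      · have hyi : y i = 0 := by_contra fun h => (hy i h).2.not_ge (le_of_max_le_right hi)
        simp [hz i (le_of_max_le_left hi), hyi]
      · rw [norm_add_rpow_eq_of_disjoint hp0 hyz]
        have := Real.rpow_le_one (norm_nonneg y) hy1 hp0.le
        push_cast
        linarith
      · simp only [map_add]
        push_cast
        linarith
  have hp' : p.toReal⁻¹ < 1 := inv_lt_one_of_one_lt₀ <| by
    simpa using (ENNReal.toReal_lt_toReal ENNReal.one_ne_top hp).2 hp1
  obtain ⟨N, hN⟩ := exists_nat_mul_rpow_lt hp' ‖φ‖ (half_pos hε)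
  obtain ⟨z, -, -, hzN, hφz⟩ := hblocks N
  have hz : ‖z‖ ≤ (N : ℝ) ^ p.toReal⁻¹ :=
    (Real.le_rpow_inv_iff_of_pos (norm_nonneg _) N.cast_nonneg hp0).2 hzN
  have : re (φ z) ≤ ‖φ‖ * (N : ℝ) ^ p.toReal⁻¹ :=
    (re_le_norm _).trans ((φ.le_opNorm z).trans (by gcongr))
  linarith

variable {E : Type*} [NormedAddCommGroup E] [NormedSpace 𝕜 E]

theorem tendsto_comp_tailCLM [FiniteDimensional 𝕜 E] (hp1 : 1 < p) (hp : p ≠ ∞)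
    (A : lp X p →L[𝕜] E) :
    Tendsto (fun m => A ∘L tailCLM 𝕜 m) atTop (𝓝 0) :=
  ContinuousLinearMap.tendsto_zero_of_forall_dual_comp fun φ => by
    simpa only [ContinuousLinearMap.comp_assoc] using tendsto_dual_comp_tailCLM hp1 hp (φ ∘L A)

theorem tendsto_tailCLM_comp [FiniteDimensional 𝕜 E] (hp : p ≠ ∞) (A : E →L[𝕜] lp X p) :
    Tendsto (fun m => tailCLM 𝕜 m ∘L A) atTop (𝓝 0) :=
  ContinuousLinearMap.tendsto_zero_of_forall_apply fun x =>
    tendsto_tailCLM_apply (𝕜 := 𝕜) hp (A x)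

theorem tsum_single_comp_apply {g : ∀ j, E →L[𝕜] X j}
    (hg : Summable fun j => lp.singleContinuousLinearMap 𝕜 X p j ∘L g j) (y : E) (j : ℕ) :
    (∑' i, lp.singleContinuousLinearMap 𝕜 X p i ∘L g i) y j = g j y := by
  rw [ContinuousLinearMap.tsum_apply_of_summable hg]
  refine ((lp.evalCLM 𝕜 X p j).map_tsum (hg.mapL (ContinuousLinearMap.apply 𝕜 _ y))).trans ?_
  rw [tsum_eq_single j fun i hij => by simp [hij.symm]]
  simp

theorem tsum_comp_evalCLM_apply {g : ∀ k, X k →L[𝕜] E}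
    (hg : Summable fun k => g k ∘L lp.evalCLM 𝕜 X p k) {y : lp X p} {k : ℕ}
    (hy : ∀ i, i ≠ k → y i = 0) :
    (∑' i, g i ∘L lp.evalCLM 𝕜 X p i) y = g k (y k) := by
  rw [ContinuousLinearMap.tsum_apply_of_summable hg,
    tsum_eq_single k fun i hik => by simp [hy i hik]]
  simp

variable [∀ n, FiniteDimensional 𝕜 (X n)]

open ContinuousLinearMap in
theorem exists_finiteRows_sub (hp1 : 1 < p) (hp : p ≠ ∞) (T : lp X p →L[𝕜] lp X p) {ε : ℝ}
    (hε : 0 < ε) : ∃ R ∈ (finiteRank 𝕜 (lp X p) (lp X p)).topologicalClosure,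
      ‖R‖ ≤ ε ∧ FiniteRows (𝕜 := 𝕜) (T - R) := by
  have := fun n => FiniteDimensional.complete 𝕜 (X n)
  choose m hm using fun j => ((tendsto_comp_tailCLM hp1 hp (lp.evalCLM 𝕜 X p j ∘L T)).eventually
    (Metric.closedBall_mem_nhds 0 (by positivity : 0 < ε / 2 / 2 ^ j))).exists
  set F := fun j => lp.singleContinuousLinearMap 𝕜 X p j ∘L (lp.evalCLM 𝕜 X p j ∘L T) ∘L
    tailCLM 𝕜 (m j)
  have hF : ∀ j, ‖F j‖ ≤ ε / 2 / 2 ^ j := fun j => (opNorm_comp_le _ _).trans <|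
    (mul_le_of_le_one_left (norm_nonneg _) (norm_singleContinuousLinearMap_le j)).trans
      (mem_closedBall_zero_iff.1 (hm j))
  have hsum : Summable F := .of_norm_bounded (hasSum_geometric_two' ε).summable hF
  refine ⟨∑' j, F j, tsum_mem (Submodule.isClosed_topologicalClosure _) fun j =>
      Submodule.le_topologicalClosure _ (comp_mem_finiteRank _ _),
    tsum_of_norm_bounded (hasSum_geometric_two' ε) hF, fun j => ⟨m j, fun k hk y hy => ?_⟩⟩
  have hRy : (∑' i, F i) y j = T y j := (tsum_single_comp_apply hsum y j).trans <| by
    rw [comp_apply, tailCLM_eq_self fun i hi => hy i (by omega)]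
    rfl
  rw [sub_apply, lp.coeFn_sub, Pi.sub_apply, hRy, sub_self]

open ContinuousLinearMap in
theorem exists_finiteColumns_sub (hp : p ≠ ∞) (A : lp X p →L[𝕜] lp X p) {ε : ℝ} (hε : 0 < ε) :
    ∃ C ∈ (finiteRank 𝕜 (lp X p) (lp X p)).topologicalClosure, ‖C‖ ≤ ε ∧
      FiniteColumns (𝕜 := 𝕜) (A - C) ∧
      (FiniteRows (𝕜 := 𝕜) A → FiniteRows (𝕜 := 𝕜) (A - C)) := by
  have := fun n => FiniteDimensional.complete 𝕜 (X n)
  choose m hm using fun k => ((tendsto_tailCLM_comp hp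
    (A ∘L lp.singleContinuousLinearMap 𝕜 X p k)).eventually
    (Metric.closedBall_mem_nhds 0 (by positivity : 0 < ε / 2 / 2 ^ k))).exists
  set F := fun k => (tailCLM 𝕜 (m k) ∘L A ∘L lp.singleContinuousLinearMap 𝕜 X p k) ∘L
    lp.evalCLM 𝕜 X p k
  have hF : ∀ k, ‖F k‖ ≤ ε / 2 / 2 ^ k := fun k => (opNorm_comp_le _ _).trans <|
    (mul_le_of_le_one_right (norm_nonneg _) (norm_evalCLM_le k)).trans
      (mem_closedBall_zero_iff.1 (hm k))
  have hsum : Summable F := .of_norm_bounded (hasSum_geometric_two' ε).summable hF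
  have hcol : ∀ k y, (∀ i, i ≠ k → y i = 0) → ∀ j,
      (A - ∑' k, F k) y j = if m k ≤ j then 0 else A y j := fun k y hy j => by
    have hCy := tsum_comp_evalCLM_apply hsum hy
    rw [comp_apply, comp_apply, lp.singleContinuousLinearMap_apply,
      ← eq_single_of_forall_ne hy] at hCy
    rw [sub_apply, lp.coeFn_sub, Pi.sub_apply, hCy]
    by_cases hj : m k ≤ j <;> simp [hj]
  refine ⟨∑' k, F k, tsum_mem (Submodule.isClosed_topologicalClosure _) fun k =>
      Submodule.le_topologicalClosure _ (comp_mem_finiteRank _ _),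
    tsum_of_norm_bounded (hasSum_geometric_two' ε) hF,
    fun k => ⟨m k, fun j hj y hy => by rw [hcol k y hy, if_pos hj.le]⟩, fun hA j => ?_⟩
  obtain ⟨k₀, hk₀⟩ := hA j
  exact ⟨k₀, fun k hk y hy => by rw [hcol k y hy, hk₀ k hk y hy, ite_self]⟩

end lp

open ContinuousLinearMap lp in
/-- Let `T` be a bounded operator on `X = (⊕ₙ Xₙ)_{ℓ_p}` with each `Xₙ`
finite-dimensional and `1 < p < ∞`. Then for each `ε > 0` there is a bounded operator `T'`
on `X` with finite rows and finite columns such that `T - T'` is approximable and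
`‖T - T'‖ ≤ ε`. -/
theorem finite_rows_columns_perturbation {𝕜 : Type*} [RCLike 𝕜]
    {X : ℕ → Type*} [∀ n, NormedAddCommGroup (X n)] [∀ n, NormedSpace 𝕜 (X n)]
    [∀ n, FiniteDimensional 𝕜 (X n)]
    (p : ℝ≥0∞) [Fact (1 ≤ p)] (hp1 : 1 < p) (hptop : p ≠ ∞)
    (T : lp X p →L[𝕜] lp X p) :
    ∀ ε : ℝ, 0 < ε → ∃ T' : lp X p →L[𝕜] lp X p,
      FiniteRows (𝕜 := 𝕜) T' ∧ FiniteColumns (𝕜 := 𝕜) T' ∧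
      (T - T') ∈ closure {A : lp X p →L[𝕜] lp X p | FiniteDimensional 𝕜 (LinearMap.range (A : lp X p →ₗ[𝕜] lp X p))} ∧
      ‖T - T'‖ ≤ ε := by
  intro ε hε
  obtain ⟨R, hR, hRε, hrows⟩ := exists_finiteRows_sub hp1 hptop T (half_pos hε)
  obtain ⟨C, hC, hCε, hcols, hrows'⟩ := exists_finiteColumns_sub hptop (T - R) (half_pos hε)
  have hTT' : T - (T - R - C) = R + C := by abel
  refine ⟨T - R - C, hrows' hrows, hcols, ?_, ?_⟩
  · rw [hTT', ← coe_finiteRank, ← Submodule.topologicalClosure_coe]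
    exact add_mem hR hC
  · rw [hTT']
    linarith [norm_add_le R C]
end

section
/- Let X, Y be Banach spaces, p ∈ [1,∞], T : X → Y a bounded operator, and suppose there exists C ≥ 1 such that T C-fixes a copy of ℓ_pⁿ for every n ∈ ℕ. Then for every free ultrafilter 𝒰 on ℕ, the ultrapower T_𝒰 : X_𝒰 → Y_𝒰 fixes a copy of E_p, where E_p = ℓ_p if p < ∞ and E_p = c₀ if p = ∞. -/
open scoped ENNReal ZeroAtInfty

variable (𝕜 : Type*) [RCLike 𝕜]

/-- The submodule of `ℓ∞(ℕ, X)` of sequences whose norms tend to `0` along the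
ultrafilter `𝒰`. -/
noncomputable def uNullSubmodule (𝒰 : Ultrafilter ℕ) (X : Type*) [NormedAddCommGroup X]
    [NormedSpace 𝕜 X] : Submodule 𝕜 (lp (fun _ : ℕ => X) ∞) where
  carrier := {f | Filter.Tendsto (fun n => ‖f n‖) 𝒰 (nhds 0)}
  zero_mem' := by
    simp only [Set.mem_setOf_eq, lp.coeFn_zero, Pi.zero_apply, norm_zero]
    exact tendsto_const_nhds
  add_mem' := by
    intro f g hf hg
    have h : Filter.Tendsto (fun n => ‖f n‖ + ‖g n‖) 𝒰 (nhds 0) := by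
      simpa using hf.add hg
    refine squeeze_zero (fun n => norm_nonneg _) (fun n => ?_) h
    have hfg : (f + g : lp (fun _ : ℕ => X) ∞) n = f n + g n := by
      rw [lp.coeFn_add]; rfl
    rw [hfg]
    exact norm_add_le _ _
  smul_mem' := by
    intro c f hf
    have h : Filter.Tendsto (fun n => ‖c‖ * ‖f n‖) 𝒰 (nhds (‖c‖ * 0)) :=
      hf.const_mul _
    rw [mul_zero] at h
    refine h.congr fun n => ?_
    have hcf : (c • f : lp (fun _ : ℕ => X) ∞) n = c • f n := by
      rw [lp.coeFn_smul]; rfl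
    rw [hcf, norm_smul]

/-- The ultrapower of a Banach space `X` along an ultrafilter `𝒰` on `ℕ`: the quotient of
`ℓ∞(ℕ, X)` by the subspace of sequences tending to zero along `𝒰`, with the quotient
(semi)norm. -/
noncomputable abbrev Ultrapower (𝒰 : Ultrafilter ℕ) (X : Type*) [NormedAddCommGroup X]
    [NormedSpace 𝕜 X] : Type _ :=
  lp (fun _ : ℕ => X) ∞ ⧸ uNullSubmodule 𝕜 𝒰 X

variable {X Y : Type*} [NormedAddCommGroup X] [NormedSpace 𝕜 X]
  [NormedAddCommGroup Y] [NormedSpace 𝕜 Y]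

variable {𝕜} in
/-- The entrywise action of an operator `T : X → Y` on `ℓ∞(ℕ, X)`. -/
noncomputable def seqMap (T : X →L[𝕜] Y) :
    lp (fun _ : ℕ => X) ∞ →ₗ[𝕜] lp (fun _ : ℕ => Y) ∞ where
  toFun f := ⟨fun n => T (f n), memℓp_infty ⟨‖T‖ * ‖f‖, by
    rintro - ⟨n, rfl⟩
    calc ‖T (f n)‖ ≤ ‖T‖ * ‖f n‖ := T.le_opNorm _
    _ ≤ ‖T‖ * ‖f‖ :=
      mul_le_mul_of_nonneg_left (lp.norm_apply_le_norm ENNReal.top_ne_zero f n)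
        (norm_nonneg T)⟩⟩
  map_add' f g := by
    ext n
    simp only [lp.coeFn_add, Pi.add_apply]
    exact T.map_add _ _
  map_smul' c f := by
    ext n
    simp only [lp.coeFn_smul, Pi.smul_apply, RingHom.id_apply]
    exact T.map_smul _ _

variable {𝕜} in
/-- The operator induced by `T : X → Y` between the ultrapowers `X_𝒰 → Y_𝒰`. -/
noncomputable def ultrapowerMap (𝒰 : Ultrafilter ℕ) (T : X →L[𝕜] Y) :
    Ultrapower 𝕜 𝒰 X →ₗ[𝕜] Ultrapower 𝕜 𝒰 Y :=
  Submodule.mapQ (uNullSubmodule 𝕜 𝒰 X) (uNullSubmodule 𝕜 𝒰 Y) (seqMap T) (by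
    intro f hf
    simp only [Submodule.mem_comap, uNullSubmodule, Submodule.mem_mk, AddSubmonoid.mem_mk,
      AddSubsemigroup.mem_mk, Set.mem_setOf_eq] at hf ⊢
    have h : Filter.Tendsto (fun n => ‖T‖ * ‖f n‖) 𝒰 (nhds (‖T‖ * 0)) := hf.const_mul _
    rw [mul_zero] at h
    exact squeeze_zero (fun n => norm_nonneg _) (fun n => T.le_opNorm _) h)

/-!
Choose `Rₙ : ℓ_pⁿ → X` with `‖Rₙ‖ ≤ C` and `‖T Rₙ v‖ ≥ ‖v‖ / C`, and let `Pₙ` truncate a sequence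
of `E_p` to its first `n` coordinates. Then `e ↦ [(Rₙ (Pₙ e))ₙ]` maps `E_p` into `X_𝒰` with norm
at most `C`, and since `‖Pₙ e‖ → ‖e‖` and `𝒰` is free, `‖T_𝒰 [(Rₙ (Pₙ e))ₙ]‖ ≥ ‖e‖ / C`.
-/

open Filter Topology

section UltrapowerEmbedding

variable {𝕜}

theorem Ultrapower.le_norm_mk_of_tendsto {𝒰 : Ultrafilter ℕ} {f : lp (fun _ : ℕ => X) ∞}
    {a : ℕ → ℝ} {L : ℝ} (ha : Tendsto a 𝒰 (𝓝 L)) (hle : ∀ n, a n ≤ ‖f n‖) :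
    L ≤ ‖(Submodule.Quotient.mk f : Ultrapower 𝕜 𝒰 X)‖ := by
  refine QuotientAddGroup.le_norm_iff.2 fun g hg => ?_
  have hnull : Tendsto (fun n => ‖(g - f) n‖) 𝒰 (𝓝 0) := (Submodule.Quotient.eq _).1 hg
  refine le_of_tendsto' (by simpa using ha.sub hnull) fun n => ?_
  calc a n - ‖(g - f) n‖ ≤ ‖f n‖ - ‖f n - g n‖ := by
        rw [← norm_neg, lp.coeFn_sub, Pi.sub_apply, neg_sub]; linarith [hle n]
    _ ≤ ‖g n‖ := by linarith [norm_sub_norm_le (f n) (g n)]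
    _ ≤ ‖g‖ := lp.norm_apply_le_norm ENNReal.top_ne_zero g n

theorem ultrapowerMap_mk (𝒰 : Ultrafilter ℕ) (T : X →L[𝕜] Y) (f : lp (fun _ : ℕ => X) ∞) :
    ultrapowerMap 𝒰 T (Submodule.Quotient.mk f) = Submodule.Quotient.mk (seqMap T f) :=
  rfl

theorem seqMap_apply (T : X →L[𝕜] Y) (f : lp (fun _ : ℕ => X) ∞) (n : ℕ) :
    seqMap T f n = T (f n) :=
  rfl

variable {E : Type*} [NormedAddCommGroup E] [NormedSpace 𝕜 E]

noncomputable def seqOfBoundedFamily (S : ℕ → E →ₗ[𝕜] X) {M : ℝ}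
    (hS : ∀ n e, ‖S n e‖ ≤ M * ‖e‖) : E →ₗ[𝕜] lp (fun _ : ℕ => X) ∞ where
  toFun e := ⟨fun n => S n e, memℓp_infty ⟨M * ‖e‖, by rintro - ⟨n, rfl⟩; exact hS n e⟩⟩
  map_add' e e' := by ext n; exact (S n).map_add e e'
  map_smul' c e := by ext n; exact (S n).map_smul c e

theorem seqOfBoundedFamily_apply (S : ℕ → E →ₗ[𝕜] X) {M : ℝ} (hS : ∀ n e, ‖S n e‖ ≤ M * ‖e‖)
    (e : E) (n : ℕ) : seqOfBoundedFamily S hS e n = S n e :=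
  rfl

theorem norm_seqOfBoundedFamily_le (S : ℕ → E →ₗ[𝕜] X) {M : ℝ}
    (hS : ∀ n e, ‖S n e‖ ≤ M * ‖e‖) (e : E) : ‖seqOfBoundedFamily S hS e‖ ≤ M * ‖e‖ :=
  lp.norm_le_of_forall_le ((norm_nonneg _).trans (hS 0 e)) (hS · e)

theorem exists_ultrapowerMap_bounded_below (T : X →L[𝕜] Y) (S : ℕ → E →ₗ[𝕜] X) {M c : ℝ}
    (hS : ∀ n e, ‖S n e‖ ≤ M * ‖e‖)
    (hT : ∀ e, ∃ a : ℕ → ℝ, Tendsto a atTop (𝓝 (c * ‖e‖)) ∧ ∀ n, a n ≤ ‖T (S n e)‖)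
    (𝒰 : Ultrafilter ℕ) (h𝒰 : (𝒰 : Filter ℕ) ≤ cofinite) :
    ∃ R : E →ₗ[𝕜] Ultrapower 𝕜 𝒰 X,
      (∀ e, ‖R e‖ ≤ M * ‖e‖) ∧ ∀ e, c * ‖e‖ ≤ ‖ultrapowerMap 𝒰 T (R e)‖ := by
  refine ⟨(uNullSubmodule 𝕜 𝒰 X).mkQ ∘ₗ seqOfBoundedFamily S hS, fun e => ?_, fun e => ?_⟩
  · exact (Submodule.Quotient.norm_mk_le _ _).trans (norm_seqOfBoundedFamily_le S hS e)
  · obtain ⟨a, ha, haT⟩ := hT e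
    rw [LinearMap.comp_apply, Submodule.mkQ_apply, ultrapowerMap_mk]
    refine Ultrapower.le_norm_mk_of_tendsto
      (ha.mono_left (h𝒰.trans Nat.cofinite_eq_atTop.le)) fun n => ?_
    rw [seqMap_apply, seqOfBoundedFamily_apply]
    exact haT n

theorem exists_ultrapowerMap_bounded_below_of_truncations (p : ℝ≥0∞) [Fact (1 ≤ p)]
    (T : X →L[𝕜] Y) {C : ℝ} (hC : 0 < C)
    (hfix : ∀ n : ℕ, ∃ R : PiLp p (fun _ : Fin n => 𝕜) →L[𝕜] X,
      ‖R‖ ≤ C ∧ ∀ v : PiLp p (fun _ : Fin n => 𝕜), (1 / C) * ‖v‖ ≤ ‖T (R v)‖)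
    (P : ∀ n : ℕ, E →ₗ[𝕜] PiLp p (fun _ : Fin n => 𝕜)) (hP : ∀ n e, ‖P n e‖ ≤ ‖e‖)
    (hP_tendsto : ∀ e, Tendsto (fun n => ‖P n e‖) atTop (𝓝 ‖e‖))
    (𝒰 : Ultrafilter ℕ) (h𝒰 : (𝒰 : Filter ℕ) ≤ cofinite) :
    ∃ c : ℝ, 0 < c ∧ ∃ M : ℝ, ∃ R : E →ₗ[𝕜] Ultrapower 𝕜 𝒰 X,
      (∀ e, ‖R e‖ ≤ M * ‖e‖) ∧ ∀ e, c * ‖e‖ ≤ ‖ultrapowerMap 𝒰 T (R e)‖ := by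
  choose R hR hRT using hfix
  have hS : ∀ n e, ‖((R n).toLinearMap ∘ₗ P n) e‖ ≤ C * ‖e‖ := fun n e =>
    ((R n).le_opNorm _).trans (mul_le_mul (hR n) (hP n e) (norm_nonneg _) hC.le)
  refine ⟨1 / C, by positivity, C, exists_ultrapowerMap_bounded_below T _ hS
    (fun e => ⟨fun n => 1 / C * ‖P n e‖, (hP_tendsto e).const_mul _, fun n => hRT n _⟩) 𝒰 h𝒰⟩

end UltrapowerEmbedding

theorem ZeroAtInftyContinuousMap.norm_eq_iSup_norm {α β : Type*} [TopologicalSpace α]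
    [SeminormedAddCommGroup β] (f : C₀(α, β)) : ‖f‖ = ⨆ x, ‖f x‖ := by
  rw [← norm_toBCF_eq_norm, BoundedContinuousFunction.norm_eq_iSup_norm]
  rfl

section Truncation

variable {𝕜}

noncomputable def lpTrunc (p : ℝ≥0∞) [Fact (1 ≤ p)] (n : ℕ) :
    lp (fun _ : ℕ => 𝕜) p →ₗ[𝕜] PiLp p (fun _ : Fin n => 𝕜) where
  toFun e := WithLp.toLp p (fun i => e i)
  map_add' e f := PiLp.ext fun i => by simp only [lp.coeFn_add, Pi.add_apply, PiLp.add_apply]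
  map_smul' c e := PiLp.ext fun i => by
    simp only [lp.coeFn_smul, Pi.smul_apply, PiLp.smul_apply, RingHom.id_apply]

variable {p : ℝ≥0∞} [Fact (1 ≤ p)]

theorem norm_lpTrunc (hp : 0 < p.toReal) (n : ℕ) (e : lp (fun _ : ℕ => 𝕜) p) :
    ‖lpTrunc p n e‖ = (∑ i ∈ Finset.range n, ‖e i‖ ^ p.toReal) ^ p.toReal⁻¹ := by
  rw [PiLp.norm_eq_sum hp, one_div]
  exact congrArg (· ^ _) (Fin.sum_univ_eq_sum_range (fun i => ‖e i‖ ^ p.toReal) n)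

theorem norm_lpTrunc_le (hp : 0 < p.toReal) (n : ℕ) (e : lp (fun _ : ℕ => 𝕜) p) :
    ‖lpTrunc p n e‖ ≤ ‖e‖ := by
  rw [norm_lpTrunc hp, ← Real.rpow_rpow_inv (norm_nonneg e) hp.ne']
  gcongr
  exact lp.sum_rpow_le_norm_rpow hp e _

theorem tendsto_norm_lpTrunc (hp : 0 < p.toReal) (e : lp (fun _ : ℕ => 𝕜) p) :
    Tendsto (fun n => ‖lpTrunc p n e‖) atTop (𝓝 ‖e‖) := by
  have h := (lp.hasSum_norm hp e).tendsto_sum_nat.rpow_const (p := p.toReal⁻¹) (by simp)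
  rw [Real.rpow_rpow_inv (norm_nonneg e) hp.ne'] at h
  simpa only [norm_lpTrunc hp] using h

noncomputable def c0Trunc (n : ℕ) : C₀(ℕ, 𝕜) →ₗ[𝕜] PiLp ∞ (fun _ : Fin n => 𝕜) where
  toFun e := WithLp.toLp ∞ (fun i => e i)
  map_add' _ _ := rfl
  map_smul' _ _ := rfl

theorem norm_c0Trunc (n : ℕ) (e : C₀(ℕ, 𝕜)) : ‖c0Trunc n e‖ = ⨆ i : Fin n, ‖e i‖ :=
  PiLp.norm_eq_ciSup _

theorem norm_c0Trunc_le (n : ℕ) (e : C₀(ℕ, 𝕜)) : ‖c0Trunc n e‖ ≤ ‖e‖ :=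
  (norm_c0Trunc n e).trans_le <| Real.iSup_le (fun i =>
    (e.toBCF.norm_coe_le_norm i).trans_eq ZeroAtInftyContinuousMap.norm_toBCF_eq_norm)
    (norm_nonneg e)

theorem tendsto_norm_c0Trunc (e : C₀(ℕ, 𝕜)) :
    Tendsto (fun n => ‖c0Trunc n e‖) atTop (𝓝 ‖e‖) := by
  refine tendsto_order.2 ⟨fun a ha => ?_, fun a ha => .of_forall fun n =>
    (norm_c0Trunc_le n e).trans_lt ha⟩
  rw [ZeroAtInftyContinuousMap.norm_eq_iSup_norm] at ha
  obtain ⟨i, hi⟩ := exists_lt_of_lt_ciSup ha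
  refine eventually_atTop.2 ⟨i + 1, fun n hn => hi.trans_le ?_⟩
  rw [norm_c0Trunc]
  exact le_ciSup (f := fun j : Fin n => ‖e j‖) (Finite.bddAbove_range _) ⟨i, hn⟩

end Truncation

theorem ultrapower_fixes_of_uniformly_fixes
    (p : ℝ≥0∞) [Fact (1 ≤ p)] (T : X →L[𝕜] Y)
    (hfix : ∃ C : ℝ, 1 ≤ C ∧ ∀ n : ℕ, ∃ R : PiLp p (fun _ : Fin n => 𝕜) →L[𝕜] X,
      ‖R‖ ≤ C ∧ ∀ v : PiLp p (fun _ : Fin n => 𝕜), (1 / C) * ‖v‖ ≤ ‖T (R v)‖) :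
    ∀ 𝒰 : Ultrafilter ℕ, (𝒰 : Filter ℕ) ≤ Filter.cofinite →
      (p ≠ ∞ → ∃ c : ℝ, 0 < c ∧ ∃ M : ℝ,
        ∃ R : lp (fun _ : ℕ => 𝕜) p →ₗ[𝕜] Ultrapower 𝕜 𝒰 X,
          (∀ e, ‖R e‖ ≤ M * ‖e‖) ∧
          ∀ e, c * ‖e‖ ≤ ‖ultrapowerMap 𝒰 T (R e)‖) ∧
      (p = ∞ → ∃ c : ℝ, 0 < c ∧ ∃ M : ℝ,
        ∃ R : C₀(ℕ, 𝕜) →ₗ[𝕜] Ultrapower 𝕜 𝒰 X,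
          (∀ e, ‖R e‖ ≤ M * ‖e‖) ∧
          ∀ e, c * ‖e‖ ≤ ‖ultrapowerMap 𝒰 T (R e)‖) := by
  obtain ⟨C, hC, hR⟩ := hfix
  intro 𝒰 h𝒰
  have hC0 : 0 < C := zero_lt_one.trans_le hC
  refine ⟨fun hp => ?_, fun hp => ?_⟩
  · have hp0 : 0 < p.toReal := ENNReal.toReal_pos (zero_lt_one.trans_le Fact.out).ne' hp
    exact exists_ultrapowerMap_bounded_below_of_truncations p T hC0 hR (lpTrunc p)
      (norm_lpTrunc_le hp0) (tendsto_norm_lpTrunc hp0) 𝒰 h𝒰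
  · subst hp
    exact exists_ultrapowerMap_bounded_below_of_truncations ∞ T hC0 hR c0Trunc
      norm_c0Trunc_le tendsto_norm_c0Trunc 𝒰 h𝒰
end

section
/- Let E be a nonzero finite-dimensional Banach space, X, Y Banach spaces, C' > C ≥ 1, T : X → Y a bounded operator, and 𝒰 a free ultrafilter on ℕ such that the ultrapower T_𝒰 : X_𝒰 → Y_𝒰 C-fixes a copy of E. Then T C'-fixes a copy of E. -/
open scoped ENNReal ZeroAtInfty

variable (𝕜 : Type*) [RCLike 𝕜]

variable {X Y : Type*} [NormedAddCommGroup X] [NormedSpace 𝕜 X]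
  [NormedAddCommGroup Y] [NormedSpace 𝕜 Y]

/-! Lift `R` linearly to `ℓ∞(ℕ, X)`. Since the norm of a class in the ultrapower is the limit
along `𝒰` of the norms of the coordinates of any representative, the coordinate operators
`Lₙ : E → X` of the lift satisfy `‖Lₙ e‖ → ‖R e‖` and `‖T (Lₙ e)‖ → ‖T_𝒰 (R e)‖` along `𝒰`
for every `e`. The `Lₙ` are uniformly bounded, so these functions are equi-Lipschitz, and on the
compact unit sphere of `E` the convergence is uniform. Hence for `𝒰`-many `n` the strict
margins `C < C'` and `1 / C' < 1 / C` hold on the whole sphere, and `Lₙ` `C'`-fixes `E`. -/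

open Filter Topology Metric
open scoped NNReal

theorem tendstoUniformly_of_lipschitzWith_of_tendsto {ι α β : Type*} [PseudoEMetricSpace α]
    [CompactSpace α] [PseudoEMetricSpace β] {l : Filter ι} {F : ι → α → β} {f : α → β}
    {K : ℝ≥0} (hF : ∀ i, LipschitzWith K (F i)) (h : ∀ x, Tendsto (F · x) l (𝓝 (f x))) :
    TendstoUniformly F f l :=
  UniformFun.tendsto_iff_tendstoUniformly.1
    (((LipschitzWith.uniformEquicontinuous F K hF).equicontinuous.tendsto_uniformFun_iff_pi
      l f).2 (tendsto_pi_nhds.2 h))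

theorem TendstoUniformlyOn.eventually_forall_gt {ι α : Type*} {l : Filter ι} {F : ι → α → ℝ}
    {f : α → ℝ} {s : Set α} {a b : ℝ} (hba : b < a) (h : TendstoUniformlyOn F f l s)
    (hf : ∀ x ∈ s, a ≤ f x) : ∀ᶠ i in l, ∀ x ∈ s, b < F i x := by
  filter_upwards [h.neg.eventually_forall_lt (neg_lt_neg hba) fun x hx => neg_le_neg (hf x hx)]
    with i hi x hx
  exact neg_lt_neg_iff.1 (hi x hx)

section

variable {𝕜} {E F : Type*} [NormedAddCommGroup E] [NormedSpace 𝕜 E] [SeminormedAddCommGroup F]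
  [NormedSpace 𝕜 F]

theorem ContinuousLinearMap.tendstoUniformlyOn_norm_apply {ι : Type*} {l : Filter ι}
    {L : ι → E →L[𝕜] F} {K : ℝ≥0} (hL : ∀ i, ‖L i‖₊ ≤ K) {p : E → ℝ}
    (h : ∀ e, Tendsto (fun i => ‖L i e‖) l (𝓝 (p e))) {s : Set E} (hs : IsCompact s) :
    TendstoUniformlyOn (fun i e => ‖L i e‖) p l s := by
  have := isCompact_iff_compactSpace.1 hs
  rw [tendstoUniformlyOn_iff_tendstoUniformly_comp_coe]
  refine tendstoUniformly_of_lipschitzWith_of_tendsto (K := K) (fun i => ?_) fun e => h e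
  simpa [Function.comp_def] using lipschitzWith_one_norm.comp (((L i).lipschitz.weaken (hL i)).comp
    (LipschitzWith.subtype_val s))

theorem LinearMap.mul_norm_le_norm_apply_of_unit_norm (f : E →ₗ[𝕜] F) {c : ℝ}
    (hf : ∀ x, ‖x‖ = 1 → c ≤ ‖f x‖) (x : E) : c * ‖x‖ ≤ ‖f x‖ := by
  rcases eq_or_ne x 0 with rfl | hx
  · simp
  have := hf _ (norm_smul_inv_norm (𝕜 := 𝕜) hx)
  rwa [map_smul, norm_smul, norm_inv, RCLike.norm_coe_norm, ← div_eq_inv_mul,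
    le_div_iff₀ (norm_pos_iff.2 hx)] at this

end

section

variable {𝕜} {𝒰 : Ultrafilter ℕ}

theorem mem_uNullSubmodule_iff {f : lp (fun _ : ℕ => X) ∞} :
    f ∈ uNullSubmodule 𝕜 𝒰 X ↔ Tendsto (fun n => ‖f n‖) 𝒰 (𝓝 0) :=
  Iff.rfl

theorem eventually_norm_apply_lt_of_norm_mk_lt {f : lp (fun _ : ℕ => X) ∞} {b : ℝ}
    (hb : ‖(Submodule.Quotient.mk f : Ultrapower 𝕜 𝒰 X)‖ < b) : ∀ᶠ n in 𝒰, ‖f n‖ < b := by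
  obtain ⟨g, hg, hgb⟩ := Submodule.Quotient.norm_mk_lt
    (Submodule.Quotient.mk f : Ultrapower 𝕜 𝒰 X) (sub_pos.2 hb)
  rw [add_sub_cancel] at hgb
  have hnull := mem_uNullSubmodule_iff.1 ((Submodule.Quotient.eq _).1 hg.symm)
  filter_upwards [hnull.eventually_lt_const (sub_pos.2 hgb)] with n hn
  calc ‖f n‖ ≤ ‖g n‖ + ‖(f - g) n‖ := norm_le_norm_add_norm_sub' _ _
    _ < ‖g‖ + (b - ‖g‖) := add_lt_add_of_le_of_lt (lp.norm_apply_le_norm ENNReal.top_ne_zero g n) hn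
    _ = b := add_sub_cancel _ _

theorem norm_mk_le_of_eventually_norm_apply_le {f : lp (fun _ : ℕ => X) ∞} {a : ℝ}
    (ha : ∀ᶠ n in 𝒰, ‖f n‖ ≤ a) : ‖(Submodule.Quotient.mk f : Ultrapower 𝕜 𝒰 X)‖ ≤ a := by
  classical
  obtain ⟨n₀, hn₀⟩ := ha.exists
  have ha₀ : 0 ≤ a := (norm_nonneg _).trans hn₀
  let g : lp (fun _ : ℕ => X) ∞ := ⟨fun n => if ‖f n‖ ≤ a then f n else 0, memℓp_infty ⟨a, by
    rintro - ⟨n, rfl⟩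
    dsimp only
    split_ifs with h <;> simp [h, ha₀]⟩⟩
  have hfg : (Submodule.Quotient.mk f : Ultrapower 𝕜 𝒰 X) = Submodule.Quotient.mk g := by
    refine (Submodule.Quotient.eq _).2 (mem_uNullSubmodule_iff.2 (tendsto_const_nhds.congr' ?_))
    filter_upwards [ha] with n hn
    change (0 : ℝ) = ‖f n - if ‖f n‖ ≤ a then f n else 0‖
    rw [if_pos hn, sub_self, norm_zero]
  rw [hfg]
  refine (Submodule.Quotient.norm_mk_le _ g).trans (lp.norm_le_of_forall_le ha₀ fun n => ?_)
  change ‖if ‖f n‖ ≤ a then f n else 0‖ ≤ a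
  split_ifs with h <;> simp [h, ha₀]

theorem tendsto_norm_apply_ultrapower (f : lp (fun _ : ℕ => X) ∞) :
    Tendsto (fun n => ‖f n‖) 𝒰 (𝓝 ‖(Submodule.Quotient.mk f : Ultrapower 𝕜 𝒰 X)‖) := by
  refine tendsto_order.2 ⟨fun a ha => ?_, fun b hb => eventually_norm_apply_lt_of_norm_mk_lt hb⟩
  by_contra h
  have := norm_mk_le_of_eventually_norm_apply_le (𝕜 := 𝕜)
    ((Ultrafilter.eventually_not.2 h).mono fun n => le_of_not_gt)
  exact this.not_gt ha

theorem exists_bounded_seq_tendsto_norm_of_ultrapower {E : Type*} [NormedAddCommGroup E]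
    [NormedSpace 𝕜 E] [FiniteDimensional 𝕜 E] (T : X →L[𝕜] Y) (R : E →ₗ[𝕜] Ultrapower 𝕜 𝒰 X) :
    ∃ (L : ℕ → E →L[𝕜] X) (K : ℝ≥0), (∀ n, ‖L n‖₊ ≤ K) ∧
      (∀ e, Tendsto (fun n => ‖L n e‖) 𝒰 (𝓝 ‖R e‖)) ∧
      ∀ e, Tendsto (fun n => ‖T (L n e)‖) 𝒰 (𝓝 ‖ultrapowerMap 𝒰 T (R e)‖) := by
  obtain ⟨F, hF⟩ := Module.projective_lifting_property (uNullSubmodule 𝕜 𝒰 X).mkQ R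
    (Submodule.mkQ_surjective _)
  have hRF (e : E) : R e = Submodule.Quotient.mk (F e) := (LinearMap.congr_fun hF e).symm
  let F' : E →L[𝕜] lp (fun _ : ℕ => X) ∞ := LinearMap.toContinuousLinearMap F
  refine ⟨fun n => (lp.evalCLM 𝕜 (fun _ => X) ∞ n).comp F', ‖F'‖₊, fun n => ?_,
    fun e => ?_, fun e => ?_⟩
  · refine ContinuousLinearMap.opNNNorm_le_bound _ _ fun e => ?_
    rw [← NNReal.coe_le_coe]
    exact (lp.norm_apply_le_norm ENNReal.top_ne_zero (F' e) n).trans (F'.le_opNorm e)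
  · rw [hRF]
    exact tendsto_norm_apply_ultrapower (F e)
  · rw [hRF]
    exact tendsto_norm_apply_ultrapower (seqMap T (F e))

end

theorem fixes_of_ultrapower_fixes {E : Type*} [NormedAddCommGroup E] [NormedSpace 𝕜 E]
    [FiniteDimensional 𝕜 E]
    {C C' : ℝ} (hC : 1 ≤ C) (hCC' : C < C')
    (T : X →L[𝕜] Y) (𝒰 : Ultrafilter ℕ)
    (hfix : ∃ R : E →ₗ[𝕜] Ultrapower 𝕜 𝒰 X,
      (∀ e : E, ‖R e‖ ≤ C * ‖e‖) ∧
      ∀ e : E, (1 / C) * ‖e‖ ≤ ‖ultrapowerMap 𝒰 T (R e)‖) :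
    ∃ R' : E →L[𝕜] X, ‖R'‖ ≤ C' ∧ ∀ e : E, (1 / C') * ‖e‖ ≤ ‖T (R' e)‖ := by
  obtain ⟨R, hR_le, hR_ge⟩ := hfix
  obtain ⟨L, K, hL, hL_tendsto, hTL_tendsto⟩ := exists_bounded_seq_tendsto_norm_of_ultrapower T R
  have hTL (n : ℕ) : ‖T.comp (L n)‖₊ ≤ ‖T‖₊ * K :=
    (T.opNNNorm_comp_le (L n)).trans (by gcongr; exact hL n)
  have hS : IsCompact (sphere (0 : E) 1) :=
    have := FiniteDimensional.proper 𝕜 E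
    isCompact_sphere 0 1
  have hupper : ∀ᶠ n in 𝒰, ∀ e ∈ sphere (0 : E) 1, ‖L n e‖ < C' :=
    (ContinuousLinearMap.tendstoUniformlyOn_norm_apply hL hL_tendsto hS).eventually_forall_lt
      hCC' fun e he => by simpa [mem_sphere_zero_iff_norm.1 he] using hR_le e
  have hlower : ∀ᶠ n in 𝒰, ∀ e ∈ sphere (0 : E) 1, 1 / C' < ‖T.comp (L n) e‖ :=
    (ContinuousLinearMap.tendstoUniformlyOn_norm_apply hTL hTL_tendsto hS).eventually_forall_gt
      (one_div_lt_one_div_of_lt (by linarith) hCC')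
      fun e he => by simpa [mem_sphere_zero_iff_norm.1 he] using hR_ge e
  obtain ⟨n, hn_upper, hn_lower⟩ := (hupper.and hlower).exists
  refine ⟨L n, ContinuousLinearMap.opNorm_le_of_unit_norm (by linarith) fun e he =>
    (hn_upper e (mem_sphere_zero_iff_norm.2 he)).le, ?_⟩
  exact LinearMap.mul_norm_le_norm_apply_of_unit_norm (T.comp (L n)).toLinearMap fun e he =>
    (hn_lower e (mem_sphere_zero_iff_norm.2 he)).le
end
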